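/- (Window-count identity) Let X_1,…,X_n be an SLP representing T = val(X_n) and let q ≥ 2. Then max(|T| − q + 1, 0) = Σ_{i : X_i = X_ℓ X_r} vOcc(X_i)·max(|t_i| − q + 1, 0), where |t_i| = min(q−1, |val(X_ℓ)|) + min(q−1, |val(X_r)|); that is, the total number of length-q windows of T equals the weighted total number of length-q windows of the strings t_i. -/
import Mathlib


/-- The substring `S[u:v]` (1-indexed, inclusive; empty if `v < u`). -/
def substr {α : Type*} (S : List α) (u v : ℕ) : List α := (S.drop (u - 1)).take (v + 1 - u)

/-- `pre(S,q) = S[1:min(q,|S|)]`, the length-`q` prefix of `S`. -/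
def pre {α : Type*} (S : List α) (q : ℕ) : List α := S.take q

/-- `suf(S,q) = S[max(1,|S|-q+1):|S|]`, the length-`q` suffix of `S`. -/
def suf {α : Type*} (S : List α) (q : ℕ) : List α := S.drop (S.length - q)

/-- `Occ(T,P) = {k ≥ 1 : T[k:k+|P|-1] = P}`. -/
def Occ {α : Type*} (T P : List α) : Set ℕ := {k | 1 ≤ k ∧ substr T k (k + P.length - 1) = P}

/-- A straight-line program of size `n`: each variable `X_i` (0-indexed here) is either a
terminal `a ∈ Σ` or a concatenation `X_ℓ X_r` with `ℓ, r < i`. -/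
structure SLP (α : Type*) (n : ℕ) where
  rule : Fin n → α ⊕ (Fin n × Fin n)
  wf : ∀ i l r, rule i = Sum.inr (l, r) → l < i ∧ r < i

namespace SLP

variable {α : Type*} {n : ℕ}

/-- The string `val(X_i)` derived by variable `X_i`. -/
def val (S : SLP α n) : Fin n → List α
  | i =>
    match h : S.rule i with
    | Sum.inl a => [a]
    | Sum.inr (l, r) => S.val l ++ S.val r
termination_by i => i.val
decreasing_by
  · exact (S.wf i l r h).1
  · exact (S.wf i l r h).2

/-- The set `itv(X_i)` of occurrence intervals of `X_i` in the derivation of `T = val(X_n)`. -/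
def itv (S : SLP α n) : Fin n → Set (ℕ × ℕ)
  | i =>
    if i.val = n - 1 then {(1, (S.val i).length)}
    else
      {p | ∃ k l, ∃ h : S.rule k = Sum.inr (l, i),
          ∃ uv ∈ S.itv k, p = (uv.1 + (S.val l).length, uv.2)} ∪
      {p | ∃ k r, ∃ h : S.rule k = Sum.inr (i, r),
          ∃ uv ∈ S.itv k, p = (uv.1, uv.1 + (S.val i).length - 1)}
termination_by i => n - i.val
decreasing_by
  · have h1 : (i : ℕ) < (k : ℕ) := (S.wf k l i h).2
    have h2 : (k : ℕ) < n := k.isLt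
    omega
  · have h1 : (i : ℕ) < (k : ℕ) := (S.wf k i r h).1
    have h2 : (k : ℕ) < n := k.isLt
    omega

/-- `vOcc(X_i) = |itv(X_i)|`. -/
noncomputable def vOcc (S : SLP α n) (i : Fin n) : ℕ := (S.itv i).ncard

end SLP

namespace SLP

/-- For a concatenation variable `X_i = X_ℓ X_r`, the string
`t_i = suf(val(X_ℓ), q-1) · pre(val(X_r), q-1)` (and `[]` for terminal variables). -/
def tstr {α : Type*} {n : ℕ} (S : SLP α n) (q : ℕ) (i : Fin n) : List α :=
  match S.rule i with
  | Sum.inl _ => []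
  | Sum.inr (l, r) => suf (S.val l) (q - 1) ++ pre (S.val r) (q - 1)

end SLP


namespace SLP
variable {α : Type*} {n : ℕ} (S : SLP α n)

lemma val_inl {i : Fin n} {a : α} (h : S.rule i = Sum.inl a) : S.val i = [a] := by
  rw [val]; split <;> simp_all

lemma val_inr {i l r : Fin n} (h : S.rule i = Sum.inr (l, r)) :
    S.val i = S.val l ++ S.val r := by
  rw [val]; split <;> simp_all

lemma itv_eq (i : Fin n) : S.itv i =
    if i.val = n - 1 then {(1, (S.val i).length)}
    else
      {p | ∃ k l, ∃ _ : S.rule k = Sum.inr (l, i),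
          ∃ uv ∈ S.itv k, p = (uv.1 + (S.val l).length, uv.2)} ∪
      {p | ∃ k r, ∃ _ : S.rule k = Sum.inr (i, r),
          ∃ uv ∈ S.itv k, p = (uv.1, uv.1 + (S.val i).length - 1)} := by
  rw [itv]

lemma val_pos (i : Fin n) : 0 < (S.val i).length := by
  rcases h : S.rule i with a | ⟨l, r⟩
  · rw [S.val_inl h]; simp
  · rw [S.val_inr h]; simp
    exact Or.inl (val_pos l)
termination_by i.val
decreasing_by exact (S.wf i l r h).1

end SLP

namespace SLP
variable {α : Type*} {n : ℕ} (S : SLP α n)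

/-- Derivation-tree nodes: variable `i` occupies interval `p` in the derivation of the root. -/
inductive Desc (S : SLP α n) : Fin n → ℕ × ℕ → Prop where
  | root (i : Fin n) (h : i.val = n - 1) : Desc S i (1, (S.val i).length)
  | left {k l r : Fin n} {u v : ℕ} (hk : S.rule k = Sum.inr (l, r)) (hd : Desc S k (u, v)) :
      Desc S l (u, u + (S.val l).length - 1)
  | right {k l r : Fin n} {u v : ℕ} (hk : S.rule k = Sum.inr (l, r)) (hd : Desc S k (u, v)) :
      Desc S r (u + (S.val l).length, v)

lemma len_inr {i l r : Fin n} (h : S.rule i = Sum.inr (l, r)) :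
    (S.val i).length = (S.val l).length + (S.val r).length := by
  rw [S.val_inr h, List.length_append]

lemma desc_inv1 {i : Fin n} {p : ℕ × ℕ} (hd : Desc S i p) :
    1 ≤ p.1 ∧ p.2 + 1 = p.1 + (S.val i).length := by
  induction hd with
  | root i h => have := S.val_pos i; simp; omega
  | @left k l r u v hk hd ih =>
    have hL := S.val_pos l; have hk2 := S.len_inr hk; simp at ih ⊢; omega
  | @right k l r u v hk hd ih =>
    have hL := S.val_pos l; have hR := S.val_pos r; have hk2 := S.len_inr hk
    simp at ih ⊢; omega

lemma desc_bound {i : Fin n} {p : ℕ × ℕ} (hd : Desc S i p) {j : Fin n}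
    (hj : j.val = n - 1) : p.2 ≤ (S.val j).length := by
  induction hd with
  | root i h => have : i = j := Fin.ext (h.trans hj.symm); subst this; simp
  | @left k l r u v hk hd ih =>
    have h1 := S.desc_inv1 hd
    have hL := S.val_pos l; have hR := S.val_pos r; have hk2 := S.len_inr hk
    simp at h1 ih ⊢; omega
  | @right k l r u v hk hd ih => simp at ih ⊢; omega

/-- One derivation step from a node to one of its children. -/
def StepR (S : SLP α n) (a b : Fin n × ℕ × ℕ) : Prop :=
  ∃ l r, S.rule a.1 = Sum.inr (l, r) ∧
    (b = (l, a.2.1, a.2.1 + (S.val l).length - 1) ∨ b = (r, a.2.1 + (S.val l).length, a.2.2))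

def Reach (S : SLP α n) : (Fin n × ℕ × ℕ) → (Fin n × ℕ × ℕ) → Prop :=
  Relation.ReflTransGen (StepR S)

lemma desc_step {a b : Fin n × ℕ × ℕ} (hd : Desc S a.1 a.2) (hs : StepR S a b) :
    Desc S b.1 b.2 := by
  obtain ⟨k, u, v⟩ := a
  obtain ⟨l, r, hk, hb | hb⟩ := hs <;> subst hb
  · exact Desc.left hk hd
  · exact Desc.right hk hd

lemma desc_reach {a b : Fin n × ℕ × ℕ} (hd : Desc S a.1 a.2) (hr : Reach S a b) :
    Desc S b.1 b.2 := by
  induction hr with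
  | refl => exact hd
  | tail h1 h2 ih => exact S.desc_step ih h2

lemma step_sub {a b : Fin n × ℕ × ℕ} (hd : Desc S a.1 a.2) (hs : StepR S a b) :
    a.2.1 ≤ b.2.1 ∧ b.2.2 ≤ a.2.2 ∧ b.2.2 + 1 - b.2.1 < a.2.2 + 1 - a.2.1 := by
  obtain ⟨hu, hv⟩ := S.desc_inv1 hd
  obtain ⟨l, r, hk, hb | hb⟩ := hs <;> subst hb <;>
    · have hL := S.val_pos l; have hR := S.val_pos r; have hk2 := S.len_inr hk
      simp only
      omega

lemma reach_sub {a b : Fin n × ℕ × ℕ} (hd : Desc S a.1 a.2) (hr : Reach S a b) :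
    a.2.1 ≤ b.2.1 ∧ b.2.2 ≤ a.2.2 ∧ b.2.2 + 1 - b.2.1 ≤ a.2.2 + 1 - a.2.1 := by
  induction hr with
  | refl => omega
  | tail h1 h2 ih =>
    have := S.step_sub (S.desc_reach hd h1) h2
    omega

lemma reach_interval_eq {a b : Fin n × ℕ × ℕ} (hd : Desc S a.1 a.2) (hr : Reach S a b)
    (he : a.2 = b.2) : a = b := by
  rcases Relation.ReflTransGen.cases_head hr with h | ⟨c, hs, hr2⟩
  · exact h
  · obtain ⟨h1, h2, h3⟩ := S.step_sub hd hs
    obtain ⟨h4, h5, h6⟩ := S.reach_sub (S.desc_step hd hs) hr2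
    obtain ⟨hu, hv⟩ := S.desc_inv1 hd
    have := S.val_pos a.1
    have e1 : a.2.1 = b.2.1 := by rw [he]
    have e2 : a.2.2 = b.2.2 := by rw [he]
    omega

lemma reach_root {i : Fin n} {p : ℕ × ℕ} (hd : Desc S i p) {j : Fin n} (hj : j.val = n - 1) :
    Reach S (j, 1, (S.val j).length) (i, p) := by
  induction hd with
  | root i h =>
    have : i = j := Fin.ext (h.trans hj.symm); subst this
    exact Relation.ReflTransGen.refl
  | @left k l r u v hk hd ih => exact ih.tail ⟨l, r, hk, Or.inl rfl⟩
  | @right k l r u v hk hd ih => exact ih.tail ⟨l, r, hk, Or.inr rfl⟩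

/-- Comparability: any two overlapping derivation-tree intervals are nested, and the
larger node reaches the smaller. -/
lemma comp {i j : Fin n} {p p' : ℕ × ℕ} (d1 : Desc S i p) (d2 : Desc S j p') :
    p.1 ≤ p'.2 → p'.1 ≤ p.2 →
    (Reach S (i, p) (j, p') ∧ p.1 ≤ p'.1 ∧ p'.2 ≤ p.2) ∨
    (Reach S (j, p') (i, p) ∧ p'.1 ≤ p.1 ∧ p.2 ≤ p'.2) := by
  induction d2 with
  | root j hj =>
    intro h1 h2
    right
    exact ⟨S.reach_root d1 hj, (S.desc_inv1 d1).1, S.desc_bound d1 hj⟩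
  | @left k l r u v hk hd ih =>
    intro h1 h2
    have hL := S.val_pos l; have hR := S.val_pos r; have hk2 := S.len_inr hk
    obtain ⟨hu, hv⟩ := S.desc_inv1 hd
    obtain ⟨hp1, hp2⟩ := S.desc_inv1 d1
    have hp := S.val_pos i
    simp only at hu hv h1 h2 ⊢
    rcases ih (by simp only; omega) (by simp only; omega) with
      ⟨hr, hc1, hc2⟩ | ⟨hr, hc1, hc2⟩
    · left
      simp only at hc1 hc2
      exact ⟨hr.tail ⟨l, r, hk, Or.inl rfl⟩, by omega, by omega⟩
    · simp only at hc1 hc2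
      rcases Relation.ReflTransGen.cases_head hr with h | ⟨c, hs, hr2⟩
      · injection h with e1 e2
        subst e1; subst e2
        exact Or.inl ⟨Relation.ReflTransGen.single ⟨l, r, hk, Or.inl rfl⟩, by omega⟩
      · obtain ⟨l', r', hk', hc | hc⟩ := hs
        · simp only at hk'
          rw [hk] at hk'
          injection hk' with hlr
          injection hlr with e1 e2
          subst e1; subst e2; subst hc
          right
          have hsub := S.reach_sub (S.desc_step hd ⟨l, r, hk, Or.inl rfl⟩) hr2
          simp only at hsub
          exact ⟨hr2, by omega, by omega⟩
        · simp only at hk'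
          rw [hk] at hk'
          injection hk' with hlr
          injection hlr with e1 e2
          subst e1; subst e2; subst hc
          have hsub := S.reach_sub (S.desc_step hd ⟨l, r, hk, Or.inr rfl⟩) hr2
          exfalso
          simp only at hsub
          omega
  | @right k l r u v hk hd ih =>
    intro h1 h2
    have hL := S.val_pos l; have hR := S.val_pos r; have hk2 := S.len_inr hk
    obtain ⟨hu, hv⟩ := S.desc_inv1 hd
    obtain ⟨hp1, hp2⟩ := S.desc_inv1 d1
    have hp := S.val_pos i
    simp only at hu hv h1 h2 ⊢
    rcases ih (by simp only; omega) (by simp only; omega) with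
      ⟨hr, hc1, hc2⟩ | ⟨hr, hc1, hc2⟩
    · left
      simp only at hc1 hc2
      exact ⟨hr.tail ⟨l, r, hk, Or.inr rfl⟩, by omega, by omega⟩
    · simp only at hc1 hc2
      rcases Relation.ReflTransGen.cases_head hr with h | ⟨c, hs, hr2⟩
      · injection h with e1 e2
        subst e1; subst e2
        exact Or.inl ⟨Relation.ReflTransGen.single ⟨l, r, hk, Or.inr rfl⟩, by omega⟩
      · obtain ⟨l', r', hk', hc | hc⟩ := hs
        · simp only at hk'
          rw [hk] at hk'
          injection hk' with hlr
          injection hlr with e1 e2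
          subst e1; subst e2; subst hc
          have hsub := S.reach_sub (S.desc_step hd ⟨l, r, hk, Or.inl rfl⟩) hr2
          exfalso
          simp only at hsub
          omega
        · simp only at hk'
          rw [hk] at hk'
          injection hk' with hlr
          injection hlr with e1 e2
          subst e1; subst e2; subst hc
          right
          have hsub := S.reach_sub (S.desc_step hd ⟨l, r, hk, Or.inr rfl⟩) hr2
          simp only at hsub
          exact ⟨hr2, by omega, by omega⟩

end SLP

namespace SLP
variable {α : Type*} {n : ℕ} (S : SLP α n)

/-- Two derivation-tree nodes with the same interval carry the same variable. -/
lemma desc_unique {i j : Fin n} {p : ℕ × ℕ} (d1 : Desc S i p) (d2 : Desc S j p) : i = j := by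
  obtain ⟨h1, h2⟩ := S.desc_inv1 d1
  have hp := S.val_pos i
  rcases S.comp d1 d2 (by omega) (by omega) with ⟨hr, -⟩ | ⟨hr, -⟩
  · exact congrArg Prod.fst (S.reach_interval_eq d1 hr rfl)
  · exact (congrArg Prod.fst (S.reach_interval_eq d2 hr rfl)).symm

/-- Right-child occurrences: same child interval forces same parent node. -/
lemma right_right_aux {k1 k2 l1 r1 l2 r2 : Fin n} {u1 v1 u2 v2 : ℕ}
    (d1 : Desc S k1 (u1, v1)) (d2 : Desc S k2 (u2, v2))
    (hk1 : S.rule k1 = Sum.inr (l1, r1)) (hk2 : S.rule k2 = Sum.inr (l2, r2))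
    (hs : u1 + (S.val l1).length = u2 + (S.val l2).length) (he : v1 = v2)
    (hr : Reach S (k1, u1, v1) (k2, u2, v2)) : k1 = k2 ∧ u1 = u2 ∧ v1 = v2 := by
  have hL1 := S.val_pos l1; have hR1 := S.val_pos r1; have hc1 := S.len_inr hk1
  have hL2 := S.val_pos l2; have hc2 := S.len_inr hk2
  obtain ⟨hu1, hv1⟩ := S.desc_inv1 d1
  obtain ⟨hu2, hv2⟩ := S.desc_inv1 d2
  simp only at hu1 hv1 hu2 hv2
  rcases Relation.ReflTransGen.cases_head hr with h | ⟨c, hst, hr2⟩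
  · injection h with e1 e2
    injection e2 with e2 e3
    exact ⟨e1, e2, e3⟩
  · obtain ⟨l', r', hk', hc | hc⟩ := hst
    · simp only at hk'
      rw [hk1] at hk'
      injection hk' with hlr
      injection hlr with e1 e2
      subst e1; subst e2; subst hc
      have hsub := S.reach_sub (S.desc_step d1 ⟨l1, r1, hk1, Or.inl rfl⟩) hr2
      exfalso
      simp only at hsub
      omega
    · simp only at hk'
      rw [hk1] at hk'
      injection hk' with hlr
      injection hlr with e1 e2
      subst e1; subst e2; subst hc
      have hsub := S.reach_sub (S.desc_step d1 ⟨l1, r1, hk1, Or.inr rfl⟩) hr2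
      exfalso
      simp only at hsub
      omega

lemma right_right {k1 k2 l1 r1 l2 r2 : Fin n} {u1 v1 u2 v2 : ℕ}
    (d1 : Desc S k1 (u1, v1)) (d2 : Desc S k2 (u2, v2))
    (hk1 : S.rule k1 = Sum.inr (l1, r1)) (hk2 : S.rule k2 = Sum.inr (l2, r2))
    (hs : u1 + (S.val l1).length = u2 + (S.val l2).length) (he : v1 = v2) :
    k1 = k2 ∧ u1 = u2 ∧ v1 = v2 := by
  have hL1 := S.val_pos l1; have hR1 := S.val_pos r1; have hc1 := S.len_inr hk1
  have hL2 := S.val_pos l2; have hR2 := S.val_pos r2; have hc2 := S.len_inr hk2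
  obtain ⟨hu1, hv1⟩ := S.desc_inv1 d1
  obtain ⟨hu2, hv2⟩ := S.desc_inv1 d2
  simp only at hu1 hv1 hu2 hv2
  rcases S.comp d1 d2 (by simp only; omega) (by simp only; omega) with ⟨hr, -⟩ | ⟨hr, -⟩
  · exact S.right_right_aux d1 d2 hk1 hk2 hs he hr
  · obtain ⟨e1, e2, e3⟩ := S.right_right_aux d2 d1 hk2 hk1 hs.symm he.symm hr
    exact ⟨e1.symm, e2.symm, e3.symm⟩

/-- Left-child occurrences: same child interval forces same parent node. -/
lemma left_left_aux {k1 k2 l1 r1 l2 r2 : Fin n} {u1 v1 u2 v2 : ℕ}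
    (d1 : Desc S k1 (u1, v1)) (d2 : Desc S k2 (u2, v2))
    (hk1 : S.rule k1 = Sum.inr (l1, r1)) (hk2 : S.rule k2 = Sum.inr (l2, r2))
    (hs : u1 = u2) (he : u1 + (S.val l1).length = u2 + (S.val l2).length)
    (hr : Reach S (k1, u1, v1) (k2, u2, v2)) : k1 = k2 ∧ u1 = u2 ∧ v1 = v2 := by
  have hL1 := S.val_pos l1; have hR1 := S.val_pos r1; have hc1 := S.len_inr hk1
  have hL2 := S.val_pos l2; have hR2 := S.val_pos r2; have hc2 := S.len_inr hk2
  obtain ⟨hu1, hv1⟩ := S.desc_inv1 d1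
  obtain ⟨hu2, hv2⟩ := S.desc_inv1 d2
  simp only at hu1 hv1 hu2 hv2
  rcases Relation.ReflTransGen.cases_head hr with h | ⟨c, hst, hr2⟩
  · injection h with e1 e2
    injection e2 with e2 e3
    exact ⟨e1, e2, e3⟩
  · obtain ⟨l', r', hk', hc | hc⟩ := hst
    · simp only at hk'
      rw [hk1] at hk'
      injection hk' with hlr
      injection hlr with e1 e2
      subst e1; subst e2; subst hc
      have hsub := S.reach_sub (S.desc_step d1 ⟨l1, r1, hk1, Or.inl rfl⟩) hr2
      exfalso
      simp only at hsub
      omega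
    · simp only at hk'
      rw [hk1] at hk'
      injection hk' with hlr
      injection hlr with e1 e2
      subst e1; subst e2; subst hc
      have hsub := S.reach_sub (S.desc_step d1 ⟨l1, r1, hk1, Or.inr rfl⟩) hr2
      exfalso
      simp only at hsub
      omega

lemma left_left {k1 k2 l1 r1 l2 r2 : Fin n} {u1 v1 u2 v2 : ℕ}
    (d1 : Desc S k1 (u1, v1)) (d2 : Desc S k2 (u2, v2))
    (hk1 : S.rule k1 = Sum.inr (l1, r1)) (hk2 : S.rule k2 = Sum.inr (l2, r2))
    (hs : u1 = u2) (he : u1 + (S.val l1).length = u2 + (S.val l2).length) :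
    k1 = k2 ∧ u1 = u2 ∧ v1 = v2 := by
  have hL1 := S.val_pos l1; have hR1 := S.val_pos r1; have hc1 := S.len_inr hk1
  have hL2 := S.val_pos l2; have hR2 := S.val_pos r2; have hc2 := S.len_inr hk2
  obtain ⟨hu1, hv1⟩ := S.desc_inv1 d1
  obtain ⟨hu2, hv2⟩ := S.desc_inv1 d2
  simp only at hu1 hv1 hu2 hv2
  rcases S.comp d1 d2 (by simp only; omega) (by simp only; omega) with ⟨hr, -⟩ | ⟨hr, -⟩
  · exact S.left_left_aux d1 d2 hk1 hk2 hs he hr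
  · obtain ⟨e1, e2, e3⟩ := S.left_left_aux d2 d1 hk2 hk1 hs.symm he.symm hr
    exact ⟨e1.symm, e2.symm, e3.symm⟩

/-- A left-child interval never equals a right-child interval. -/
lemma left_right {k1 k2 l1 r1 l2 r2 : Fin n} {u1 v1 u2 v2 : ℕ}
    (d1 : Desc S k1 (u1, v1)) (d2 : Desc S k2 (u2, v2))
    (hk1 : S.rule k1 = Sum.inr (l1, r1)) (hk2 : S.rule k2 = Sum.inr (l2, r2))
    (hs : u1 = u2 + (S.val l2).length)
    (he : u1 + (S.val l1).length - 1 = v2) : False := by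
  have hL1 := S.val_pos l1; have hR1 := S.val_pos r1; have hc1 := S.len_inr hk1
  have hL2 := S.val_pos l2; have hR2 := S.val_pos r2; have hc2 := S.len_inr hk2
  obtain ⟨hu1, hv1⟩ := S.desc_inv1 d1
  obtain ⟨hu2, hv2⟩ := S.desc_inv1 d2
  simp only at hu1 hv1 hu2 hv2
  rcases S.comp d1 d2 (by simp only; omega) (by simp only; omega) with
    ⟨-, hc3, hc4⟩ | ⟨-, hc3, hc4⟩ <;> simp only at hc3 hc4 <;> omega

end SLP

namespace SLP
variable {α : Type*} {n : ℕ} (S : SLP α n)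

lemma desc_of_mem_itv (i : Fin n) (p : ℕ × ℕ) (hp : p ∈ S.itv i) : Desc S i p := by
  rw [itv_eq] at hp
  by_cases hi : i.val = n - 1
  · rw [if_pos hi] at hp
    rw [Set.mem_singleton_iff] at hp
    subst hp
    exact Desc.root i hi
  · rw [if_neg hi] at hp
    rcases hp with ⟨k, l, hk, uv, huv, rfl⟩ | ⟨k, r, hk, uv, huv, rfl⟩
    · have hd : Desc S k uv := desc_of_mem_itv k uv huv
      have := Desc.right (u := uv.1) (v := uv.2) hk hd
      exact this
    · have hd : Desc S k uv := desc_of_mem_itv k uv huv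
      have := Desc.left (u := uv.1) (v := uv.2) hk hd
      exact this
termination_by n - i.val
decreasing_by
  · have h1 : (i : ℕ) < (k : ℕ) := (S.wf k l i hk).2
    have h2 : (k : ℕ) < n := k.isLt
    omega
  · have h1 : (i : ℕ) < (k : ℕ) := (S.wf k i r hk).1
    have h2 : (k : ℕ) < n := k.isLt
    omega

lemma mem_itv_of_desc {i : Fin n} {p : ℕ × ℕ} (hd : Desc S i p) : p ∈ S.itv i := by
  induction hd with
  | root i h => rw [itv_eq, if_pos h]; rfl
  | @left k l r u v hk hd ih =>
    have hlk : (l : ℕ) < (k : ℕ) := (S.wf k l r hk).1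
    have hkn : (k : ℕ) < n := k.isLt
    rw [itv_eq, if_neg (by omega)]
    exact Or.inr ⟨k, r, hk, (u, v), ih, rfl⟩
  | @right k l r u v hk hd ih =>
    have hlk : (r : ℕ) < (k : ℕ) := (S.wf k l r hk).2
    have hkn : (k : ℕ) < n := k.isLt
    rw [itv_eq, if_neg (by omega)]
    exact Or.inl ⟨k, l, hk, (u, v), ih, rfl⟩

lemma itv_eq_desc (i : Fin n) : S.itv i = {p | Desc S i p} := by
  ext p
  exact ⟨S.desc_of_mem_itv i p, S.mem_itv_of_desc⟩

lemma itv_finite (i : Fin n) : (S.itv i).Finite := by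
  have hn : 0 < n := i.pos
  set j : Fin n := ⟨n - 1, Nat.sub_lt hn one_pos⟩ with hj
  apply Set.Finite.subset ((Set.finite_Icc 1 (S.val j).length).prod
    (Set.finite_Icc 1 (S.val j).length))
  intro p hp
  have hd := S.desc_of_mem_itv i p hp
  obtain ⟨h1, h2⟩ := S.desc_inv1 hd
  have h3 := S.desc_bound hd (j := j) rfl
  have := S.val_pos i
  constructor <;> simp only [Set.mem_Icc] <;> omega

end SLP

namespace SLP
variable {α : Type*} {n : ℕ}

/-- The occurrences of `j` contributed by parent `k` (`true`: as right child;
`false`: as left child). -/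
noncomputable def childOccs (S : SLP α n) (j : Fin n) : Fin n × Bool → Finset (ℕ × ℕ) :=
  fun x =>
    match S.rule x.1 with
    | Sum.inl _ => ∅
    | Sum.inr (l, r) =>
      if x.2 then
        (if r = j then (S.itv_finite x.1).toFinset.image
            (fun uv => (uv.1 + (S.val l).length, uv.2)) else ∅)
      else
        (if l = j then (S.itv_finite x.1).toFinset.image
            (fun uv => (uv.1, uv.1 + (S.val j).length - 1)) else ∅)

variable (S : SLP α n)

lemma mem_toFinset_itv {k : Fin n} {p : ℕ × ℕ} :
    p ∈ (S.itv_finite k).toFinset ↔ p ∈ S.itv k := Set.Finite.mem_toFinset _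

lemma card_childOccs_true (j k : Fin n) :
    (childOccs S j (k, true)).card =
      (match S.rule k with
        | Sum.inl _ => 0
        | Sum.inr (_, r) => if r = j then S.vOcc k else 0) := by
  rcases h : S.rule k with a | ⟨l, r⟩
  · simp [childOccs, h]
  · simp only [childOccs, h, if_true]
    by_cases hr : r = j
    · rw [if_pos hr, if_pos hr]
      rw [Finset.card_image_of_injective _ (fun a b hab => by
        have h1 := congrArg Prod.fst hab
        have h2 := congrArg Prod.snd hab
        simp only at h1 h2
        exact Prod.ext_iff.mpr ⟨by omega, by omega⟩)]
      rw [vOcc, Set.ncard_eq_toFinset_card _ (S.itv_finite k)]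
    · simp [hr]

lemma card_childOccs_false (j k : Fin n) :
    (childOccs S j (k, false)).card =
      (match S.rule k with
        | Sum.inl _ => 0
        | Sum.inr (l, _) => if l = j then S.vOcc k else 0) := by
  rcases h : S.rule k with a | ⟨l, r⟩
  · simp [childOccs, h]
  · simp only [childOccs, h, Bool.false_eq_true, if_false]
    by_cases hl : l = j
    · rw [if_pos hl, if_pos hl]
      rw [Finset.card_image_of_injOn (fun a ha b hb hab => by
        rw [Finset.mem_coe, mem_toFinset_itv] at ha hb
        obtain ⟨ha1, ha2⟩ := S.desc_inv1 (S.desc_of_mem_itv k a ha)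
        obtain ⟨hb1, hb2⟩ := S.desc_inv1 (S.desc_of_mem_itv k b hb)
        have h1 := congrArg Prod.fst hab
        simp only at h1
        exact Prod.ext_iff.mpr ⟨h1, by omega⟩)]
      rw [vOcc, Set.ncard_eq_toFinset_card _ (S.itv_finite k)]
    · simp [hl]

lemma toFinset_itv_eq_biUnion {j : Fin n} (hj : j.val ≠ n - 1) :
    (S.itv_finite j).toFinset = Finset.univ.biUnion (childOccs S j) := by
  ext p
  rw [mem_toFinset_itv, Finset.mem_biUnion]
  rw [itv_eq, if_neg hj]
  constructor
  · rintro (⟨k, l, hk, uv, huv, rfl⟩ | ⟨k, r, hk, uv, huv, rfl⟩)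
    · exact ⟨(k, true), Finset.mem_univ _, by
        simp only [childOccs, hk, if_true]
        exact Finset.mem_image_of_mem _ (mem_toFinset_itv S |>.mpr huv)⟩
    · exact ⟨(k, false), Finset.mem_univ _, by
        simp only [childOccs, hk, Bool.false_eq_true, if_false]
        exact Finset.mem_image_of_mem _ (mem_toFinset_itv S |>.mpr huv)⟩
  · rintro ⟨⟨k, b⟩, -, hp⟩
    rcases hk : S.rule k with a | ⟨l, r⟩
    · simp [childOccs, hk] at hp
    · simp only [childOccs, hk] at hp
      cases b
      · simp only [Bool.false_eq_true, if_false] at hp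
        by_cases hl : l = j
        · rw [if_pos hl] at hp
          obtain ⟨uv, huv, rfl⟩ := Finset.mem_image.mp hp
          rw [mem_toFinset_itv] at huv
          subst hl
          exact Or.inr ⟨k, r, hk, uv, huv, rfl⟩
        · rw [if_neg hl] at hp; exact absurd hp (Finset.notMem_empty _)
      · simp only [if_true] at hp
        by_cases hr : r = j
        · rw [if_pos hr] at hp
          obtain ⟨uv, huv, rfl⟩ := Finset.mem_image.mp hp
          rw [mem_toFinset_itv] at huv
          subst hr
          exact Or.inl ⟨k, l, hk, uv, huv, rfl⟩
        · rw [if_neg hr] at hp; exact absurd hp (Finset.notMem_empty _)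

lemma mixed_case {j k1 k2 l1 r1 l2 r2 : Fin n} {p : ℕ × ℕ}
    (hk1 : S.rule k1 = Sum.inr (l1, r1)) (hk2 : S.rule k2 = Sum.inr (l2, r2))
    (hr1 : r1 = j) (hl2 : l2 = j)
    (hp1 : p ∈ (S.itv_finite k1).toFinset.image
        (fun uv => (uv.1 + (S.val l1).length, uv.2)))
    (hp2 : p ∈ (S.itv_finite k2).toFinset.image
        (fun uv => (uv.1, uv.1 + (S.val j).length - 1))) : False := by
  obtain ⟨⟨u1, v1⟩, h1, he1⟩ := Finset.mem_image.mp hp1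
  obtain ⟨⟨u2, v2⟩, h2, he2⟩ := Finset.mem_image.mp hp2
  rw [mem_toFinset_itv] at h1 h2
  have d1 := S.desc_of_mem_itv k1 _ h1
  have d2 := S.desc_of_mem_itv k2 _ h2
  have e1 : u1 + (S.val l1).length = u2 := by
    have := (congrArg Prod.fst he1).trans (congrArg Prod.fst he2).symm
    simpa using this
  have e2 : v1 = u2 + (S.val j).length - 1 := by
    have := (congrArg Prod.snd he1).trans (congrArg Prod.snd he2).symm
    simpa using this
  subst hl2
  exact S.left_right d2 d1 hk2 hk1 e1.symm e2.symm

lemma childOccs_disjoint (j : Fin n) :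
    ∀ x ∈ (Finset.univ : Finset (Fin n × Bool)), ∀ y ∈ Finset.univ, x ≠ y →
      Disjoint (childOccs S j x) (childOccs S j y) := by
  rintro ⟨k1, b1⟩ - ⟨k2, b2⟩ - hxy
  rw [Finset.disjoint_left]
  intro p hp1 hp2
  rcases hk1 : S.rule k1 with a1 | ⟨l1, r1⟩
  · simp [childOccs, hk1] at hp1
  rcases hk2 : S.rule k2 with a2 | ⟨l2, r2⟩
  · simp [childOccs, hk2] at hp2
  simp only [childOccs, hk1] at hp1
  simp only [childOccs, hk2] at hp2
  cases b1 <;> cases b2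
  · -- both false: left-left
    simp only [Bool.false_eq_true, if_false] at hp1 hp2
    by_cases hl1 : l1 = j
    case neg => rw [if_neg hl1] at hp1; exact absurd hp1 (Finset.notMem_empty _)
    by_cases hl2 : l2 = j
    case neg => rw [if_neg hl2] at hp2; exact absurd hp2 (Finset.notMem_empty _)
    rw [if_pos hl1] at hp1
    rw [if_pos hl2] at hp2
    obtain ⟨⟨u1, v1⟩, h1, he1⟩ := Finset.mem_image.mp hp1
    obtain ⟨⟨u2, v2⟩, h2, he2⟩ := Finset.mem_image.mp hp2
    rw [mem_toFinset_itv] at h1 h2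
    have d1 := S.desc_of_mem_itv k1 _ h1
    have d2 := S.desc_of_mem_itv k2 _ h2
    have e1 : u1 = u2 := by
      have := (congrArg Prod.fst he1).trans (congrArg Prod.fst he2).symm
      simpa using this
    subst hl1; subst hl2
    obtain ⟨ek, -, -⟩ := S.left_left d1 d2 hk1 hk2 e1 (by omega)
    exact hxy (by rw [ek])
  · -- b1 = false, b2 = true: mixed
    simp only [Bool.false_eq_true, if_false] at hp1
    simp only [if_true] at hp2
    by_cases hl1 : l1 = j
    case neg => rw [if_neg hl1] at hp1; exact absurd hp1 (Finset.notMem_empty _)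
    by_cases hr2 : r2 = j
    case neg => rw [if_neg hr2] at hp2; exact absurd hp2 (Finset.notMem_empty _)
    rw [if_pos hl1] at hp1
    rw [if_pos hr2] at hp2
    exact S.mixed_case hk2 hk1 hr2 hl1 hp2 hp1
  · -- b1 = true, b2 = false: mixed
    simp only [if_true] at hp1
    simp only [Bool.false_eq_true, if_false] at hp2
    by_cases hr1 : r1 = j
    case neg => rw [if_neg hr1] at hp1; exact absurd hp1 (Finset.notMem_empty _)
    by_cases hl2 : l2 = j
    case neg => rw [if_neg hl2] at hp2; exact absurd hp2 (Finset.notMem_empty _)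
    rw [if_pos hr1] at hp1
    rw [if_pos hl2] at hp2
    exact S.mixed_case hk1 hk2 hr1 hl2 hp1 hp2
  · -- both true: right-right
    simp only [if_true] at hp1 hp2
    by_cases hr1 : r1 = j
    case neg => rw [if_neg hr1] at hp1; exact absurd hp1 (Finset.notMem_empty _)
    by_cases hr2 : r2 = j
    case neg => rw [if_neg hr2] at hp2; exact absurd hp2 (Finset.notMem_empty _)
    rw [if_pos hr1] at hp1
    rw [if_pos hr2] at hp2
    obtain ⟨⟨u1, v1⟩, h1, he1⟩ := Finset.mem_image.mp hp1
    obtain ⟨⟨u2, v2⟩, h2, he2⟩ := Finset.mem_image.mp hp2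
    rw [mem_toFinset_itv] at h1 h2
    have d1 := S.desc_of_mem_itv k1 _ h1
    have d2 := S.desc_of_mem_itv k2 _ h2
    have e1 : u1 + (S.val l1).length = u2 + (S.val l2).length := by
      have := (congrArg Prod.fst he1).trans (congrArg Prod.fst he2).symm
      simpa using this
    have e2 : v1 = v2 := by
      have := (congrArg Prod.snd he1).trans (congrArg Prod.snd he2).symm
      simpa using this
    obtain ⟨ek, -, -⟩ := S.right_right d1 d2 hk1 hk2 e1 e2
    exact hxy (by rw [ek])

end SLP

namespace SLP
variable {α : Type*} {n : ℕ} (S : SLP α n)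

lemma vOcc_rec (j : Fin n) : S.vOcc j =
    (if j.val = n - 1 then 1 else 0) +
    ∑ k : Fin n, (match S.rule k with
      | Sum.inl _ => 0
      | Sum.inr (l, r) => (if l = j then S.vOcc k else 0) + (if r = j then S.vOcc k else 0)) := by
  by_cases hj : j.val = n - 1
  · rw [if_pos hj]
    have hz : ∀ k ∈ (Finset.univ : Finset (Fin n)),
        (match S.rule k with
          | Sum.inl _ => 0
          | Sum.inr (l, r) => (if l = j then S.vOcc k else 0) + (if r = j then S.vOcc k else 0))
          = 0 := by
      intro k _
      rcases hk : S.rule k with a | ⟨l, r⟩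
      · simp
      · obtain ⟨h1, h2⟩ := S.wf k l r hk
        have hkn : (k : ℕ) < n := k.isLt
        have hl : l ≠ j := by
          intro h; subst h
          rw [Fin.lt_def] at h1
          omega
        have hr : r ≠ j := by
          intro h; subst h
          rw [Fin.lt_def] at h2
          omega
        simp [hl, hr]
    rw [Finset.sum_eq_zero hz, vOcc, itv_eq, if_pos hj, Set.ncard_singleton]
    omega
  · rw [if_neg hj, zero_add]
    have h1 : S.vOcc j = ((S.itv_finite j).toFinset).card :=
      Set.ncard_eq_toFinset_card _ _
    rw [h1, S.toFinset_itv_eq_biUnion hj, Finset.card_biUnion (S.childOccs_disjoint j)]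
    rw [Fintype.sum_prod_type]
    apply Finset.sum_congr rfl
    intro k _
    rw [Fintype.sum_bool, S.card_childOccs_true j k, S.card_childOccs_false j k]
    rcases hk : S.rule k with a | ⟨l, r⟩
    · simp
    · simp only [hk]
      show _ = (if l = j then S.vOcc k else 0) + (if r = j then S.vOcc k else 0)
      omega

lemma window_local {i l r : Fin n} (q : ℕ) (hq : 2 ≤ q) (hk : S.rule i = Sum.inr (l, r)) :
    (S.val i).length + 1 - q =
      ((S.val l).length + 1 - q) + ((S.val r).length + 1 - q)
        + ((S.tstr q i).length + 1 - q) := by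
  have hL := S.val_pos l
  have hR := S.val_pos r
  have hlen := S.len_inr hk
  have ht : (S.tstr q i).length =
      ((S.val l).length - ((S.val l).length - (q - 1))) + min (q - 1) (S.val r).length := by
    simp [tstr, hk, suf, pre]
  omega

end SLP

/-- window-count identity: for `q ≥ 2`,
`max(|T| - q + 1, 0) = Σ_{i : X_i = X_ℓ X_r} vOcc(X_i) · max(|t_i| - q + 1, 0)`
(truncated subtraction `|T| + 1 - q` encodes `max(|T| - q + 1, 0)` over ℤ):
the total number of length-`q` windows of `T` equals the weighted total number of
length-`q` windows of the strings `t_i`. -/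
theorem slp_window_count {α : Type*} {n : ℕ} (S : SLP α n) (hn : 0 < n)
    (q : ℕ) (hq : 2 ≤ q) :
    (S.val ⟨n - 1, Nat.sub_lt hn one_pos⟩).length + 1 - q =
      ∑ i : Fin n,
        (match S.rule i with
          | Sum.inl _ => 0
          | Sum.inr _ => S.vOcc i * ((S.tstr q i).length + 1 - q)) := by
  classical
  -- window-count weight of each variable
  let W : Fin n → ℕ := fun i => (S.val i).length + 1 - q
  let root : Fin n := ⟨n - 1, Nat.sub_lt hn one_pos⟩
  -- Claim 1: total weighted count equals root window count plus children contributions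
  have hA1 : ∑ j : Fin n, S.vOcc j * W j = W root +
      ∑ k : Fin n, (match S.rule k with
        | Sum.inl _ => 0
        | Sum.inr (l, r) => S.vOcc k * W l + S.vOcc k * W r) := by
    have e1 : ∀ j : Fin n, S.vOcc j * W j =
        (if j = root then W j else 0) +
        ∑ k : Fin n, ((match S.rule k with
          | Sum.inl _ => 0
          | Sum.inr (l, r) => (if l = j then S.vOcc k else 0) + (if r = j then S.vOcc k else 0))
            * W j) := by
      intro j
      rw [S.vOcc_rec j, add_mul, ← Finset.sum_mul]
      congr 1
      by_cases h : (j : ℕ) = n - 1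
      · rw [if_pos h, one_mul, if_pos (Fin.ext h)]
      · rw [if_neg h, zero_mul, if_neg (fun hh => h (congrArg Fin.val hh))]
    rw [Finset.sum_congr rfl (fun j _ => e1 j), Finset.sum_add_distrib]
    congr 1
    · rw [Finset.sum_ite_eq' Finset.univ root W, if_pos (Finset.mem_univ root)]
    · rw [Finset.sum_comm]
      apply Finset.sum_congr rfl
      intro k _
      rcases hk : S.rule k with a | ⟨l, r⟩
      · simp [hk]
      · simp only [hk]
        calc ∑ j : Fin n, (((if l = j then S.vOcc k else 0)
                + (if r = j then S.vOcc k else 0)) * W j)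
            = ∑ j : Fin n, ((if l = j then S.vOcc k * W j else 0)
                + (if r = j then S.vOcc k * W j else 0)) := by
              apply Finset.sum_congr rfl
              intro j _
              rw [add_mul, ite_mul, ite_mul, zero_mul]
          _ = (∑ j : Fin n, if l = j then S.vOcc k * W j else 0)
                + ∑ j : Fin n, if r = j then S.vOcc k * W j else 0 := Finset.sum_add_distrib
          _ = S.vOcc k * W l + S.vOcc k * W r := by
              rw [Finset.sum_ite_eq, Finset.sum_ite_eq, if_pos (Finset.mem_univ l),
                if_pos (Finset.mem_univ r)]
  -- Claim 2: total weighted count equals children contributions plus crossing windows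
  have hA2 : ∑ j : Fin n, S.vOcc j * W j =
      (∑ k : Fin n, (match S.rule k with
        | Sum.inl _ => 0
        | Sum.inr (l, r) => S.vOcc k * W l + S.vOcc k * W r)) +
      ∑ i : Fin n,
        (match S.rule i with
          | Sum.inl _ => 0
          | Sum.inr _ => S.vOcc i * ((S.tstr q i).length + 1 - q)) := by
    rw [← Finset.sum_add_distrib]
    apply Finset.sum_congr rfl
    intro j _
    rcases hj : S.rule j with a | ⟨l, r⟩
    · simp only [hj]
      have h1 : (S.val j).length = 1 := by rw [S.val_inl hj]; rfl
      have h2 : W j = 0 := by show (S.val j).length + 1 - q = 0; omega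
      rw [h2, Nat.mul_zero, Nat.add_zero]
    · simp only [hj]
      have hw := S.window_local q hq hj
      show S.vOcc j * W j = S.vOcc j * W l + S.vOcc j * W r
          + S.vOcc j * ((S.tstr q j).length + 1 - q)
      show S.vOcc j * ((S.val j).length + 1 - q) = _
      rw [hw]
      ring
  have hroot : W root = (S.val ⟨n - 1, Nat.sub_lt hn one_pos⟩).length + 1 - q := rfl
  rw [← hroot]
  omega
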